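/- arXiv:2507.16625 — 7 statements merged into one kernel-verified Lean document; each statement's English description precedes it below -/
import Mathlib

section
/- Let κ be an uncountable regular cardinal. Every 2-connected graph with at least κ vertices contains two distinct vertices v and w together with a family of κ many v–w paths that pairwise meet only in v and w. -/
universe u

open Cardinal SimpleGraph

lemma exists_big_level {κ : Cardinal.{u}} (hreg : κ.IsRegular) (hunc : Cardinal.aleph0 < κ)
    {α : Type u} {s : ℕ → Set α} (hu : κ ≤ #(⋃ n, s n)) : ∃ n, κ ≤ #(s n) := by
  by_contra h
  push_neg at h
  have hre : (⋃ n, s n) = ⋃ i : ULift.{u} ℕ, s i.down := by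
    ext x; simp
  have hlt : (Cardinal.sum fun i : ULift.{u} ℕ => #(s i.down)) < κ :=
    Cardinal.sum_lt_of_isRegular hreg (by simpa using hunc) (fun i => h i.down)
  rw [hre] at hu
  exact absurd (hu.trans Cardinal.mk_iUnion_le_sum_mk) (not_le.mpr hlt)

lemma exists_big_fiber {κ : Cardinal.{u}} (hreg : κ.IsRegular)
    {A B : Type u} (f : A → B) (hA : κ ≤ #A) (hB : #B < κ) :
    ∃ b : B, κ ≤ #(f ⁻¹' {b}) := by
  by_contra h
  push_neg at h
  have he : #A = Cardinal.sum fun b => #(f ⁻¹' {b}) := by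
    rw [← Cardinal.mk_sigma]
    exact Cardinal.mk_congr (Equiv.sigmaFiberEquiv f).symm
  exact absurd (hA.trans_eq he) (not_le.mpr (Cardinal.sum_lt_of_isRegular hreg hB h))

open Cardinal SimpleGraph

section Machinery

variable {W : Type u} (H : SimpleGraph W) (hc : H.Connected) (r : W)

include hc

lemma exists_parent {x : W} (hx : x ≠ r) :
    ∃ y, H.Adj x y ∧ H.dist r y + 1 = H.dist r x := by
  obtain ⟨q, hq⟩ := (hc x r).exists_walk_length_eq_dist
  cases q with
  | nil => exact absurd rfl hx
  | @cons _ y _ hadj q' =>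
    refine ⟨y, hadj, ?_⟩
    have h1 : H.dist r y ≤ q'.length := by
      rw [SimpleGraph.dist_comm]; exact SimpleGraph.dist_le q'
    have h2 : H.dist r x ≤ H.dist r y + 1 := by
      have ht := hc.dist_triangle (u := r) (v := y) (w := x)
      have hyx : H.dist y x ≤ 1 := by
        simpa using SimpleGraph.dist_le (Walk.cons hadj.symm Walk.nil)
      omega
    have h3 : q'.length + 1 = H.dist r x := by
      rw [SimpleGraph.dist_comm]; simpa using hq
    omega

open Classical in
noncomputable def par (x : W) : W :=
  if hx : x = r then r else Classical.choose (exists_parent H hc r hx)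

lemma par_root : par H hc r r = r := dif_pos rfl

lemma par_adj {x : W} (hx : x ≠ r) : H.Adj x (par H hc r x) := by
  rw [par, dif_neg hx]; exact (Classical.choose_spec (exists_parent H hc r hx)).1

lemma par_dist {x : W} (hx : x ≠ r) :
    H.dist r (par H hc r x) + 1 = H.dist r x := by
  rw [par, dif_neg hx]; exact (Classical.choose_spec (exists_parent H hc r hx)).2

lemma dist_ne_zero' {x : W} (hx : H.dist r x ≠ 0) : x ≠ r := by
  rintro rfl; simp [hc.dist_eq_zero_iff] at hx

lemma dist_par_iterate (x : W) : ∀ i, i ≤ H.dist r x →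
    H.dist r ((par H hc r)^[i] x) + i = H.dist r x := by
  intro i
  induction i with
  | zero => simp
  | succ i ih =>
    intro hi
    have hi' := ih (by omega)
    have hne : (par H hc r)^[i] x ≠ r := dist_ne_zero' H hc r (by omega)
    rw [Function.iterate_succ_apply']
    have := par_dist H hc r hne
    omega

lemma iterate_eq_root (x : W) : (par H hc r)^[H.dist r x] x = r := by
  have := dist_par_iterate H hc r x (H.dist r x) le_rfl
  have h0 : H.dist r ((par H hc r)^[H.dist r x] x) = 0 := by omega
  have := (hc.dist_eq_zero_iff).mp h0
  exact this.symm

noncomputable def walkDown (x : W) : (m : ℕ) → m ≤ H.dist r x → H.Walk x ((par H hc r)^[m] x)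
  | 0, _ => Walk.nil
  | (m+1), hm =>
    (walkDown x m (by omega)).concat
      (by
        rw [Function.iterate_succ_apply']
        refine par_adj H hc r ?_
        refine dist_ne_zero' H hc r ?_
        have := dist_par_iterate H hc r x m (by omega)
        omega)

lemma support_walkDown (x : W) (m : ℕ) (hm : m ≤ H.dist r x) :
    (walkDown H hc r x m hm).support
      = (List.range (m+1)).map (fun i => (par H hc r)^[i] x) := by
  induction m with
  | zero => simp [walkDown]
  | succ m ih =>
    rw [walkDown, Walk.support_concat, ih (by omega)]
    simp [List.range_succ]

lemma walkDown_isPath (x : W) (m : ℕ) (hm : m ≤ H.dist r x) :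
    (walkDown H hc r x m hm).IsPath := by
  rw [Walk.isPath_def, support_walkDown]
  refine List.Nodup.map_on ?_ List.nodup_range
  intro i hi j hj hij
  simp only [List.mem_range] at hi hj
  have di := dist_par_iterate H hc r x i (by omega)
  have dj := dist_par_iterate H hc r x j (by omega)
  rw [hij] at di
  omega

end Machinery

section Fiber

variable {W : Type u} (H : SimpleGraph W) (hc : H.Connected) (r : W)

include hc r

lemma exists_big_parent_fiber {κ : Cardinal.{u}} (hreg : κ.IsRegular)
    (hunc : Cardinal.aleph0 < κ)
    (P : W → Prop) (hPc : ∀ x, P x → P (par H hc r x)) (hP : κ ≤ #{x | P x}) :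
    ∃ (w : W) (d : ℕ), 1 ≤ d ∧
      κ ≤ #{x | P x ∧ H.dist r x = d ∧ par H hc r x = w} := by
  classical
  have hcov : {x | P x} ⊆ ⋃ n, {x | P x ∧ H.dist r x = n} := by
    intro x hx
    exact Set.mem_iUnion.mpr ⟨H.dist r x, hx, rfl⟩
  obtain ⟨d0, hd0⟩ := exists_big_level hreg hunc (hP.trans (Cardinal.mk_le_mk_of_subset hcov))
  have hQ : ∃ n, κ ≤ #{x | P x ∧ H.dist r x = n} := ⟨d0, hd0⟩
  set d := Nat.find hQ with hdd
  have hdspec : κ ≤ #{x | P x ∧ H.dist r x = d} := Nat.find_spec hQ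
  have hd1 : 1 ≤ d := by
    rcases Nat.eq_zero_or_pos d with h0 | h1
    · exfalso
      have hsub : {x | P x ∧ H.dist r x = 0} ⊆ {r} := by
        intro x hx
        have := (hc.dist_eq_zero_iff).mp hx.2
        simp [this.symm]
      have : #{x | P x ∧ H.dist r x = 0} ≤ 1 := by
        simpa using Cardinal.mk_le_mk_of_subset hsub
      rw [h0] at hdspec
      exact absurd (hdspec.trans this) (by simpa using (Cardinal.one_lt_aleph0.trans hunc).not_ge)
    · exact h1
  have hprev : ¬ κ ≤ #{x | P x ∧ H.dist r x = d - 1} := Nat.find_min hQ (by omega)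
  -- parent map from level d to level d-1
  set L : Set W := {x | P x ∧ H.dist r x = d} with hL
  set L' : Set W := {x | P x ∧ H.dist r x = d - 1} with hL'
  have hmap : ∀ x : L, par H hc r (x : W) ∈ L' := by
    intro x
    obtain ⟨hxP, hxd⟩ := x.2
    have hxr : (x : W) ≠ r := dist_ne_zero' H hc r (by omega)
    have h2 := par_dist H hc r hxr
    exact ⟨hPc _ hxP, by omega⟩
  obtain ⟨b, hb⟩ := exists_big_fiber hreg (fun x : L => (⟨par H hc r x, hmap x⟩ : L'))
    hdspec (not_le.mp hprev)
  refine ⟨(b : W), d, hd1, hb.trans (Cardinal.mk_le_of_injective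
    (f := fun y => ⟨((y : L) : W), (y : L).2.1, (y : L).2.2, congrArg Subtype.val y.2⟩) ?_)⟩
  intro a a' ha
  have hv : ((a : L) : W) = ((a' : L) : W) := Subtype.mk_eq_mk.mp ha
  exact Subtype.ext (Subtype.ext hv)

lemma exists_big_degree {κ : Cardinal.{u}} (hreg : κ.IsRegular)
    (hunc : Cardinal.aleph0 < κ) (hκW : κ ≤ #W) :
    ∃ v : W, κ ≤ #{x | H.Adj v x} := by
  have huniv : κ ≤ #{x : W | True} := by
    simpa using hκW
  obtain ⟨w, d, hd1, hbig⟩ := exists_big_parent_fiber H hc r hreg hunc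
    (fun _ => True) (fun _ _ => trivial) huniv
  refine ⟨w, hbig.trans (Cardinal.mk_le_of_injective
    (f := fun y : {x | True ∧ H.dist r x = d ∧ par H hc r x = w} =>
      (⟨(y : W), ?_⟩ : {x | H.Adj w x})) ?_)⟩
  · obtain ⟨-, hyd, hyp⟩ := y.2
    have hyr : (y : W) ≠ r := dist_ne_zero' H hc r (by omega)
    have := par_adj H hc r hyr
    rw [hyp] at this
    exact this.symm
  · intro a a' ha
    exact Subtype.ext (Subtype.mk_eq_mk.mp ha)

lemma exists_fan {κ : Cardinal.{u}} (hreg : κ.IsRegular)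
    (hunc : Cardinal.aleph0 < κ) (M : Set W) (hM : κ ≤ #M) :
    ∃ (w : W) (d : ℕ) (C : Set W), 1 ≤ d ∧ κ ≤ #C ∧
      ∀ c ∈ C, H.dist r c = d ∧ par H hc r c = w ∧
        ∃ n ∈ M, ∃ j : ℕ, (par H hc r)^[j] n = c := by
  set T : Set W := {x | ∃ n ∈ M, ∃ j : ℕ, (par H hc r)^[j] n = x} with hT
  have hTc : ∀ x, x ∈ T → par H hc r x ∈ T := by
    rintro x ⟨n, hn, j, hj⟩
    exact ⟨n, hn, j + 1, by rw [Function.iterate_succ_apply', hj]⟩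
  have hMT : M ⊆ T := fun n hn => ⟨n, hn, 0, rfl⟩
  have hκT : κ ≤ #T := hM.trans (Cardinal.mk_le_mk_of_subset hMT)
  obtain ⟨w, d, hd1, hbig⟩ := exists_big_parent_fiber H hc r hreg hunc
    (fun x => x ∈ T) hTc hκT
  refine ⟨w, d, {x | x ∈ T ∧ H.dist r x = d ∧ par H hc r x = w}, hd1, hbig, ?_⟩
  rintro c ⟨hcT, hcd, hcw⟩
  exact ⟨hcd, hcw, hcT⟩

end Fiber

/-- A graph `G` is `k`-connected if it has more than `k` vertices and deleting any set of
fewer than `k` vertices leaves a connected graph. -/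
def IsKConnected {V : Type u} (G : SimpleGraph V) (k : ℕ) : Prop :=
  (k : Cardinal) < Cardinal.mk V ∧
    ∀ S : Finset V, S.card < k → (G.induce ((↑S : Set V)ᶜ)).Connected

/-- Dirac's observation: every `2`-connected graph with at least `κ` vertices, for `κ` an
uncountable regular cardinal, contains two distinct vertices joined by `κ` many internally
disjoint paths. -/
theorem two_connected_kappa_internally_disjoint_paths {V : Type u} (G : SimpleGraph V)
    (κ : Cardinal.{u}) (hreg : κ.IsRegular) (hunc : Cardinal.aleph0 < κ)
    (hconn : IsKConnected G 2) (hsize : κ ≤ Cardinal.mk V) :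
    ∃ (v w : V), v ≠ w ∧ ∃ (I : Type u) (P : I → G.Walk v w),
      Cardinal.mk I = κ ∧
      (∀ i, (P i).IsPath) ∧
      (∀ i j, i ≠ j → ∀ x, x ∈ (P i).support → x ∈ (P j).support → x = v ∨ x = w) := by
  classical
  -- G is connected
  have hGconn : G.Connected := by
    have h0 := hconn.2 ∅ (by norm_num)
    have he : ((↑(∅ : Finset V) : Set V)ᶜ) = (Set.univ : Set V) := by simp
    rw [he] at h0
    exact (SimpleGraph.induceUnivIso G).connected_iff.mp h0
  obtain ⟨r0⟩ := hGconn.nonempty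
  -- a vertex of large degree
  obtain ⟨v, hv⟩ := exists_big_degree G hGconn r0 hreg hunc hsize
  -- the graph with v deleted
  set H : SimpleGraph ↥({v}ᶜ : Set V) := G.induce ({v}ᶜ : Set V) with hHdef
  have hH : H.Connected := by
    have h1 := hconn.2 {v} (by norm_num)
    rwa [Finset.coe_singleton] at h1
  -- the neighbors of v, inside H
  set M : Set ↥({v}ᶜ : Set V) := {x | G.Adj v ↑x} with hMdef
  have hM : κ ≤ #M := by
    refine hv.trans (Cardinal.mk_le_of_injective
      (f := fun x : {x : V | G.Adj v x} => (⟨⟨x.1, x.2.ne'⟩, x.2⟩ : M)) ?_)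
    intro a a' ha
    have : (a : V) = (a' : V) := congrArg (fun z : M => ((z : ↥({v}ᶜ : Set V)) : V)) ha
    exact Subtype.ext this
  obtain ⟨r⟩ := hH.nonempty
  -- the fan
  obtain ⟨w, d, C, hd1, hC, hspec⟩ := exists_fan H hH r hreg hunc M hM
  obtain ⟨S, hS⟩ := Cardinal.le_mk_iff_exists_set.mp hC
  have hdata : ∀ i : ↥S, ∃ n : ↥({v}ᶜ : Set V), ∃ jj : ℕ,
      n ∈ M ∧ (par H hH r)^[jj] n = (((i : ↥C) : ↥({v}ᶜ : Set V))) := by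
    intro i
    obtain ⟨-, -, n, hn, jj, hj⟩ := hspec _ (i : ↥C).2
    exact ⟨n, jj, hn, hj⟩
  choose n j hnM hnj using hdata
  have hcd : ∀ i : ↥S, H.dist r ((i : ↥C) : ↥({v}ᶜ : Set V)) = d :=
    fun i => (hspec _ (i : ↥C).2).1
  have hcw : ∀ i : ↥S, par H hH r ((i : ↥C) : ↥({v}ᶜ : Set V)) = w :=
    fun i => (hspec _ (i : ↥C).2).2.1
  have hjle : ∀ i, j i ≤ H.dist r (n i) := by
    intro i
    by_contra hgt
    push_neg at hgt
    have hr : (par H hH r)^[j i] (n i) = r := by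
      have h1 : j i = (j i - H.dist r (n i)) + H.dist r (n i) := by omega
      rw [h1, Function.iterate_add_apply, iterate_eq_root H hH r,
        Function.iterate_fixed (par_root H hH r)]
    rw [hnj i] at hr
    have h2 := hcd i
    rw [hr] at h2
    rw [SimpleGraph.dist_self] at h2
    omega
  have hjd : ∀ i, d + j i = H.dist r (n i) := by
    intro i
    have h1 := dist_par_iterate H hH r (n i) (j i) (hjle i)
    rw [hnj i, hcd i] at h1
    exact h1
  have hj1 : ∀ i, j i + 1 ≤ H.dist r (n i) := by
    intro i
    have := hjd i
    omega
  have hend : ∀ i, (par H hH r)^[j i + 1] (n i) = w := by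
    intro i
    rw [Function.iterate_succ_apply', hnj i, hcw i]
  -- the walks
  set ι : H →g G := (SimpleGraph.Embedding.induce ({v}ᶜ : Set V)).toHom with hι
  have hvw : v ≠ (w : V) := fun h => w.2 (by simp [← h])
  set Wk : ∀ i : ↥S, H.Walk (n i) w :=
    fun i => (walkDown H hH r (n i) (j i + 1) (hj1 i)).copy rfl (hend i) with hWk
  have hadj : ∀ i, G.Adj v ((n i : ↥({v}ᶜ : Set V)) : V) := fun i => hnM i
  set P : ∀ _ : ↥S, G.Walk v (w : V) :=
    fun i => SimpleGraph.Walk.cons (hadj i) ((Wk i).map ι) with hP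
  have hsupWk : ∀ i, (Wk i).support
      = (List.range (j i + 2)).map (fun t => (par H hH r)^[t] (n i)) := by
    intro i
    rw [hWk]
    rw [SimpleGraph.Walk.support_copy, support_walkDown]
  have hmemWk : ∀ i x, x ∈ (Wk i).support →
      ∃ t ≤ j i + 1, x = (par H hH r)^[t] (n i) := by
    intro i x hx
    rw [hsupWk i, List.mem_map] at hx
    obtain ⟨t, ht, rfl⟩ := hx
    rw [List.mem_range] at ht
    exact ⟨t, by omega, rfl⟩
  refine ⟨v, (w : V), hvw, ↥S, P, hS, ?_, ?_⟩
  · intro i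
    rw [hP]
    refine (SimpleGraph.Walk.cons_isPath_iff _ _).mpr ?_
    constructor
    · refine SimpleGraph.Walk.map_isPath_of_injective ?_ ?_
      · exact Subtype.coe_injective
      · rw [hWk, SimpleGraph.Walk.isPath_copy]
        exact walkDown_isPath H hH r (n i) (j i + 1) (hj1 i)
    · intro hmem
      replace hmem : v ∈ ((Wk i).map ι).support := hmem
      rw [SimpleGraph.Walk.support_map, List.mem_map] at hmem
      obtain ⟨y, -, hy⟩ := hmem
      have hyv : (y : V) = v := hy
      exact y.2 (by simp [hyv])
  · intro i i' hne x hxi hxi'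
    rw [hP] at hxi hxi'
    replace hxi : x = v ∨ x ∈ ((Wk i).map ι).support := List.mem_cons.mp hxi
    replace hxi' : x = v ∨ x ∈ ((Wk i').map ι).support := List.mem_cons.mp hxi'
    rcases hxi with hxv | hxi
    · exact Or.inl hxv
    rcases hxi' with hxv | hxi'
    · exact Or.inl hxv
    by_cases hxw : x = (w : V)
    · exact Or.inr hxw
    exfalso
    rw [SimpleGraph.Walk.support_map, List.mem_map] at hxi hxi'
    obtain ⟨y, hy, rfl⟩ := hxi
    obtain ⟨y', hy', hyy⟩ := hxi'
    have hyeq : y' = y := Subtype.coe_injective hyy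
    subst hyeq
    obtain ⟨t, ht, rfl⟩ := hmemWk i _ hy
    obtain ⟨t', ht', hyt'⟩ := hmemWk i' _ hy'
    have htj : t ≤ j i := by
      rcases Nat.lt_or_ge t (j i + 1) with h | h
      · omega
      · exfalso
        have : t = j i + 1 := by omega
        rw [this, hend i] at hxw
        exact hxw rfl
    have htj' : t' ≤ j i' := by
      rcases Nat.lt_or_ge t' (j i' + 1) with h | h
      · omega
      · exfalso
        have : t' = j i' + 1 := by omega
        rw [this, hend i'] at hyt'
        rw [hyt'] at hxw
        exact hxw rfl
    -- distance of the common vertex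
    have hdy : H.dist r ((par H hH r)^[t] (n i)) + t = H.dist r (n i) :=
      dist_par_iterate H hH r (n i) t (by have := hjle i; omega)
    have hdy' : H.dist r ((par H hH r)^[t'] (n i')) + t' = H.dist r (n i') :=
      dist_par_iterate H hH r (n i') t' (by have := hjle i'; omega)
    set y := (par H hH r)^[t] (n i) with hydef
    have hdyd : d ≤ H.dist r y := by
      have := hjd i
      omega
    set e := H.dist r y - d with hedef
    have hiter : (par H hH r)^[e] y = ((i : ↥C) : ↥({v}ᶜ : Set V)) := by
      rw [hydef, ← Function.iterate_add_apply]
      have : e + t = j i := by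
        have h1 := hjd i
        omega
      rw [this, hnj i]
    have hiter' : (par H hH r)^[e] y = ((i' : ↥C) : ↥({v}ᶜ : Set V)) := by
      have h3 : H.dist r y + t' = H.dist r (n i') := by rw [hyt']; exact hdy'
      have h4 : e + t' = j i' := by
        have h5 := hjd i'
        omega
      rw [hyt', ← Function.iterate_add_apply, h4, hnj i']
    have hcc : ((i : ↥C) : ↥({v}ᶜ : Set V)) = ((i' : ↥C) : ↥({v}ᶜ : Set V)) := by
      rw [← hiter, ← hiter']
    exact hne (Subtype.coe_injective (Subtype.coe_injective hcc))
end

section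
/- Let G be a connected, finitely separable graph and let A, B be disjoint, nonempty, finite sets of vertices of G, each inducing a connected subgraph of G. Then G has a finite bond separating A from B: there is a finite set F of edges of G such that A lies in a single component C₁ of G − F, B lies in a single component C₂ of G − F with C₁ ≠ C₂, and F is precisely the set of all edges of G with one endpoint in C₁ and the other endpoint in C₂. -/
/-- The set of edges of `G` with one endpoint in `A` and the other in `B`. -/
def edgesBetween {V : Type*} (G : SimpleGraph V) (A B : Set V) : Set (Sym2 V) :=
  {e | e ∈ G.edgeSet ∧ ∃ x ∈ A, ∃ y ∈ B, e = s(x, y)}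

/-- A graph is finitely separable if every pair of distinct vertices can be separated by
deleting a finite set of edges. -/
def FinSeparable {V : Type*} (G : SimpleGraph V) : Prop :=
  ∀ x y : V, x ≠ y → ∃ F : Set (Sym2 V), F.Finite ∧ F ⊆ G.edgeSet ∧
    ¬ (G.deleteEdges F).Reachable x y

/-- `C` is (the vertex set of) a connected component of `H`. -/
def IsCompOf {V : Type*} (H : SimpleGraph V) (C : Set V) : Prop :=
  ∃ v, C = {x | H.Reachable v x}

/-!
Finite separability, applied to the finitely many pairs in `A × B`, gives a finite edge set `F₀`
separating `A` from `B`. Cutting along the boundary of the union of the components of `A` in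
`G - F₀` leaves `A` inside a single component `C` with finite boundary `∂C`. Let `D` be the
component of `B` in `G - ∂C`. Then `∂D ⊆ ∂C`, so every edge leaving `D` ends in `C`, and `∂D` is a
finite bond between `D` and the component of `C` in `G - ∂D`.
-/

open SimpleGraph

section EdgeBoundary

variable {V : Type*} {G : SimpleGraph V}

def edgeBoundary (G : SimpleGraph V) (S : Set V) : Set (Sym2 V) :=
  edgesBetween G S Sᶜ

lemma edgesBetween_comm (A B : Set V) : edgesBetween G A B = edgesBetween G B A := by
  suffices ∀ A B : Set V, edgesBetween G A B ⊆ edgesBetween G B A from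
    subset_antisymm (this A B) (this B A)
  rintro A B _ ⟨hadj, x, hx, y, hy, rfl⟩
  exact ⟨hadj, y, hy, x, hx, Sym2.eq_swap⟩

lemma edgesBetween_mono_right {A B B' : Set V} (h : B ⊆ B') :
    edgesBetween G A B ⊆ edgesBetween G A B' := by
  rintro _ ⟨hadj, x, hx, y, hy, rfl⟩
  exact ⟨hadj, x, hx, y, h hy, rfl⟩

lemma edgeBoundary_compl (S : Set V) : edgeBoundary G Sᶜ = edgeBoundary G S := by
  rw [edgeBoundary, compl_compl, edgesBetween_comm, edgeBoundary]

lemma mk_notMem_edgeBoundary {S : Set V} {x y : V} (hx : x ∈ S) (hy : y ∈ S) :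
    s(x, y) ∉ edgeBoundary G S := by
  rintro ⟨-, a, -, b, hb, he⟩
  rcases Sym2.eq_iff.mp he with ⟨-, rfl⟩ | ⟨rfl, -⟩
  exacts [hb hy, hb hx]

lemma edgeBoundary_subset {F : Set (Sym2 V)} {S : Set V}
    (hS : ∀ ⦃u v⦄, u ∈ S → (G.deleteEdges F).Adj u v → v ∈ S) : edgeBoundary G S ⊆ F := by
  rintro _ ⟨hadj, x, hx, y, hy, rfl⟩
  by_contra h
  exact hy (hS hx (deleteEdges_adj.mpr ⟨hadj, h⟩))

lemma edgeBoundary_reachSet_subset (F : Set (Sym2 V)) (v : V) :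
    edgeBoundary G {x | (G.deleteEdges F).Reachable v x} ⊆ F :=
  edgeBoundary_subset fun _ _ hu hadj => hu.trans hadj.reachable

lemma mem_of_reachable_deleteEdges_edgeBoundary {S : Set V} {u v : V} (hu : u ∈ S)
    (h : (G.deleteEdges (edgeBoundary G S)).Reachable u v) : v ∈ S := by
  by_contra hv
  obtain ⟨p⟩ := h
  obtain ⟨d, -, hd₁, hd₂⟩ := p.exists_boundary_dart S hu hv
  obtain ⟨hadj, hnot⟩ := deleteEdges_adj.mp d.adj
  exact hnot ⟨hadj, d.fst, hd₁, d.snd, hd₂, rfl⟩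

lemma reachSet_deleteEdges_edgeBoundary {F : Set (Sym2 V)} {C : Set V} {v : V}
    (hC : C = {x | (G.deleteEdges F).Reachable v x}) :
    {x | (G.deleteEdges (edgeBoundary G C)).Reachable v x} = C := by
  subst hC
  refine subset_antisymm (fun x hx => mem_of_reachable_deleteEdges_edgeBoundary ?_ hx) ?_
  · exact Reachable.refl v
  · exact fun x hx => hx.mono (deleteEdges_anti (edgeBoundary_reachSet_subset F v))

lemma reachable_deleteEdges_edgeBoundary_of_subset {S X : Set V} (hXS : X ⊆ S)
    (hX : (G.induce X).Preconnected) {x y : V} (hx : x ∈ X) (hy : y ∈ X) :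
    (G.deleteEdges (edgeBoundary G S)).Reachable x y :=
  (hX ⟨x, hx⟩ ⟨y, hy⟩).map
    ⟨Subtype.val, fun {u v} huv =>
      deleteEdges_adj.mpr ⟨huv, mk_notMem_edgeBoundary (hXS u.2) (hXS v.2)⟩⟩

lemma edgeBoundary_subset_edgesBetween {C D : Set V} (hDC : D ⊆ Cᶜ)
    (h : edgeBoundary G D ⊆ edgeBoundary G C) : edgeBoundary G D ⊆ edgesBetween G D C := by
  rintro _ he
  obtain ⟨-, c, hc, c', -, hcc'⟩ := h he
  obtain ⟨hadj, x, hx, y, -, rfl⟩ := he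
  rcases Sym2.eq_iff.mp hcc' with ⟨rfl, -⟩ | ⟨-, rfl⟩
  exacts [absurd hc (hDC hx), ⟨hadj, x, hx, y, hc, rfl⟩]

lemma FinSeparable.exists_finite_forall_not_reachable (hsep : FinSeparable G)
    {A B : Set V} (hA : A.Finite) (hB : B.Finite) (hAB : Disjoint A B) :
    ∃ F : Set (Sym2 V), F.Finite ∧ ∀ a ∈ A, ∀ b ∈ B, ¬ (G.deleteEdges F).Reachable a b := by
  have hpair : ∀ p : A × B, ∃ F : Set (Sym2 V), F.Finite ∧
      ¬ (G.deleteEdges F).Reachable p.1 p.2 := fun p => by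
    obtain ⟨F, hF, -, hF'⟩ := hsep p.1 p.2 (hAB.ne_of_mem p.1.2 p.2.2)
    exact ⟨F, hF, hF'⟩
  choose F hF hFsep using hpair
  have := hA.to_subtype
  have := hB.to_subtype
  refine ⟨⋃ p, F p, Set.finite_iUnion hF, fun a ha b hb hab => ?_⟩
  exact hFsep (⟨a, ha⟩, ⟨b, hb⟩) (hab.mono (deleteEdges_anti (Set.subset_iUnion F _)))

lemma exists_finite_bond_of_reachSet {F₀ : Set (Sym2 V)} {C B : Set V} {a b : V}
    (hC : C = {x | (G.deleteEdges F₀).Reachable a x}) (hCfin : (edgeBoundary G C).Finite)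
    (hBC : B ⊆ Cᶜ) (hB : (G.induce B).Preconnected) (hb : b ∈ B) :
    ∃ (F : Set (Sym2 V)) (C₁ C₂ : Set V),
      F.Finite ∧
      IsCompOf (G.deleteEdges F) C₁ ∧ IsCompOf (G.deleteEdges F) C₂ ∧
      C ⊆ C₁ ∧ B ⊆ C₂ ∧ C₁ ≠ C₂ ∧
      F = edgesBetween G C₁ C₂ := by
  have ha : a ∈ C := hC ▸ Reachable.refl a
  set D := {x | (G.deleteEdges (edgeBoundary G C)).Reachable b x}
  set C₁ := {x | (G.deleteEdges (edgeBoundary G D)).Reachable a x}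
  have hDC : D ⊆ Cᶜ := fun x hx => mem_of_reachable_deleteEdges_edgeBoundary (hBC hb)
    (by rwa [edgeBoundary_compl])
  have hBD : B ⊆ D := fun x hx => by
    have := reachable_deleteEdges_edgeBoundary_of_subset hBC hB hb hx
    rwa [edgeBoundary_compl] at this
  have hDbd : edgeBoundary G D ⊆ edgeBoundary G C := edgeBoundary_reachSet_subset _ b
  have hD : {x | (G.deleteEdges (edgeBoundary G D)).Reachable b x} = D :=
    reachSet_deleteEdges_edgeBoundary rfl
  have hCC₁ : C ⊆ C₁ := by
    rw [← reachSet_deleteEdges_edgeBoundary hC]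
    exact fun x hx => hx.mono (deleteEdges_anti hDbd)
  have hDC₁ : D ⊆ C₁ᶜ := by
    rintro x hbx hax
    rw [← hD] at hbx
    have haD : a ∈ D := by
      rw [← hD]
      exact hbx.trans hax.symm
    exact hDC haD ha
  refine ⟨edgeBoundary G D, C₁, D, hCfin.subset hDbd, ⟨a, rfl⟩, ⟨b, hD.symm⟩, hCC₁, hBD,
    fun h => hDC₁ (h ▸ hCC₁ ha) (hCC₁ ha), ?_⟩
  calc edgeBoundary G D = edgesBetween G D C₁ :=
        subset_antisymm ((edgeBoundary_subset_edgesBetween hDC hDbd).trans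
          (edgesBetween_mono_right hCC₁)) (edgesBetween_mono_right (Set.subset_compl_comm.mp hDC₁))
    _ = edgesBetween G C₁ D := edgesBetween_comm D C₁

end EdgeBoundary

theorem exists_finite_bond_separating_general {V : Type*} (G : SimpleGraph V)
    (hsep : FinSeparable G) (A B : Set V)
    (hAfin : A.Finite) (hBfin : B.Finite) (hAne : A.Nonempty) (hBne : B.Nonempty)
    (hdisj : Disjoint A B)
    (hAconn : (G.induce A).Connected) (hBconn : (G.induce B).Connected) :
    ∃ (F : Set (Sym2 V)) (C₁ C₂ : Set V),
      F.Finite ∧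
      IsCompOf (G.deleteEdges F) C₁ ∧ IsCompOf (G.deleteEdges F) C₂ ∧
      A ⊆ C₁ ∧ B ⊆ C₂ ∧ C₁ ≠ C₂ ∧
      F = edgesBetween G C₁ C₂ := by
  obtain ⟨a, ha⟩ := hAne
  obtain ⟨b, hb⟩ := hBne
  obtain ⟨F₀, hF₀, hF₀sep⟩ := hsep.exists_finite_forall_not_reachable hAfin hBfin hdisj
  set S := {v | ∃ a ∈ A, (G.deleteEdges F₀).Reachable a v}
  have hAS : A ⊆ S := fun x hx => ⟨x, hx, Reachable.refl x⟩
  have hBS : B ⊆ Sᶜ := fun y hy ⟨x, hx, hxy⟩ => hF₀sep x hx y hy hxy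
  have hSfin : (edgeBoundary G S).Finite := hF₀.subset <|
    edgeBoundary_subset fun _ _ ⟨x, hx, hxu⟩ huv => ⟨x, hx, hxu.trans huv.reachable⟩
  set C := {x | (G.deleteEdges (edgeBoundary G S)).Reachable a x}
  have hAC : A ⊆ C := fun x hx =>
    reachable_deleteEdges_edgeBoundary_of_subset hAS hAconn.preconnected ha hx
  have hCS : C ⊆ S := fun x hx => mem_of_reachable_deleteEdges_edgeBoundary (hAS ha) hx
  obtain ⟨F, C₁, C₂, hF, hC₁, hC₂, hCC₁, hBC₂, hne, hbond⟩ :=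
    exists_finite_bond_of_reachSet rfl (hSfin.subset (edgeBoundary_reachSet_subset _ a))
      (hBS.trans (Set.compl_subset_compl.mpr hCS)) hBconn.preconnected hb
  exact ⟨F, C₁, C₂, hF, hC₁, hC₂, hAC.trans hCC₁, hBC₂, hne, hbond⟩

/-- In a connected, finitely separable graph, any two disjoint, nonempty, finite, connected
vertex sets `A`, `B` can be separated by a finite bond. -/
theorem exists_finite_bond_separating {V : Type*} (G : SimpleGraph V) (hG : G.Connected)
    (hsep : FinSeparable G) (A B : Set V)
    (hAfin : A.Finite) (hBfin : B.Finite) (hAne : A.Nonempty) (hBne : B.Nonempty)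
    (hdisj : Disjoint A B)
    (hAconn : (G.induce A).Connected) (hBconn : (G.induce B).Connected) :
    ∃ (F : Set (Sym2 V)) (C₁ C₂ : Set V),
      F.Finite ∧
      IsCompOf (G.deleteEdges F) C₁ ∧ IsCompOf (G.deleteEdges F) C₂ ∧
      A ⊆ C₁ ∧ B ⊆ C₂ ∧ C₁ ≠ C₂ ∧
      F = edgesBetween G C₁ C₂ :=
  exists_finite_bond_separating_general G hsep A B hAfin hBfin hAne hBne hdisj hAconn hBconn
end

section
/- Let G be a connected graph and let (T, 𝒳) be a tree-cut decomposition of G of finite adhesion whose parts are precisely the ω-edge blocks of G and such that for every edge t₁t₂ of T there is an edge of G between X_{t₁} and X_{t₂}. Then for every region C' of T, the subgraph of G induced on ⋃_{t ∈ C'} X_t is a region of G. -/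
/-- `x ~ y` iff no finite set of edges of `G` separates `x` from `y`. -/
def OmegaEquiv {V : Type*} (G : SimpleGraph V) (x y : V) : Prop :=
  ∀ F : Set (Sym2 V), F.Finite → (G.deleteEdges F).Reachable x y

/-- The ω-edge blocks of `G` are the equivalence classes of `OmegaEquiv`. -/
def IsOmegaEdgeBlock {V : Type*} (G : SimpleGraph V) (B : Set V) : Prop :=
  ∃ x, B = {y | OmegaEquiv G x y}

/-- Given a tree-cut decomposition `(T, X)` and an edge `t₁t₂` of `T`, the union of the parts
indexed by the component of `T - t₁t₂` containing `t₁`. -/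
def side {τ V : Type*} (T : SimpleGraph τ) (X : τ → Set V) (t₁ t₂ : τ) : Set V :=
  ⋃ t ∈ {u | (T.deleteEdges {s(t₁, t₂)}).Reachable t₁ u}, X t

/-- A region of `G` is (the vertex set of) a connected subgraph with finite edge boundary. -/
def IsRegion {V : Type*} (G : SimpleGraph V) (C : Set V) : Prop :=
  (G.induce C).Connected ∧ (edgesBetween G C Cᶜ).Finite

/-!
Parts of the decomposition are ω-edge blocks, so once the edge boundary of
`C = ⋃ t ∈ C', X t` is known to be finite, any two vertices of one part are joined by a
walk avoiding that boundary, i.e. a walk inside `C`; the edges of `G` joining parts that are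
adjacent in `T` then make `C` connected along the connected region `C'`.

The boundary of `C` is finite because each of its edges `xy`, with `x ∈ X t`, `t ∈ C'` and
`y ∈ X t'`, `t' ∉ C'`, lies in the adhesion set of an edge `s₁s₂` of `T` leaving `C'`: take the
first edge leaving `C'` on the path from `t` to `t'`; then `t'` is on the side of `s₂` via the
rest of the path, and `t` on the side of `s₁` because `C'` is connected and avoids `s₂`. There
are finitely many such edges of `T` and each adhesion set is finite.
-/

open SimpleGraph

section

variable {V τ : Type*}

lemma OmegaEquiv.refl (G : SimpleGraph V) (x : V) : OmegaEquiv G x x :=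
  fun _ _ => Reachable.refl x

lemma IsOmegaEdgeBlock.nonempty {G : SimpleGraph V} {B : Set V} (hB : IsOmegaEdgeBlock G B) :
    B.Nonempty := by
  obtain ⟨x, rfl⟩ := hB
  exact ⟨x, OmegaEquiv.refl G x⟩

lemma IsOmegaEdgeBlock.omegaEquiv {G : SimpleGraph V} {B : Set V} (hB : IsOmegaEdgeBlock G B)
    {x y : V} (hx : x ∈ B) (hy : y ∈ B) : OmegaEquiv G x y := by
  obtain ⟨a, rfl⟩ := hB
  exact fun F hF => (hx F hF).symm.trans (hy F hF)

section EdgeBoundary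

variable {G : SimpleGraph V} {C : Set V}

lemma SimpleGraph.Walk.exists_reachable_induce_of_deleteEdges {F : Set (Sym2 V)}
    (hF : edgesBetween G C Cᶜ ⊆ F) {x z : V} (w : (G.deleteEdges F).Walk x z) (hx : x ∈ C) :
    ∃ hz : z ∈ C, (G.induce C).Reachable ⟨x, hx⟩ ⟨z, hz⟩ := by
  induction w with
  | nil => exact ⟨hx, Reachable.refl _⟩
  | @cons a b c hab w ih =>
    rw [deleteEdges_adj] at hab
    have hb : b ∈ C := by
      by_contra hb
      exact hab.2 (hF ⟨G.mem_edgeSet.mpr hab.1, a, hx, b, hb, rfl⟩)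
    obtain ⟨hz, hbz⟩ := ih hb
    have hab' : (G.induce C).Adj ⟨a, hx⟩ ⟨b, hb⟩ := hab.1
    exact ⟨hz, hab'.reachable.trans hbz⟩

lemma OmegaEquiv.reachable_induce {x y : V} (hxy : OmegaEquiv G x y)
    (hC : (edgesBetween G C Cᶜ).Finite) (hx : x ∈ C) :
    ∃ hy : y ∈ C, (G.induce C).Reachable ⟨x, hx⟩ ⟨y, hy⟩ :=
  (hxy _ hC).elim fun w => Walk.exists_reachable_induce_of_deleteEdges subset_rfl w hx

end EdgeBoundary

section TreeRegion

variable {T : SimpleGraph τ} {C' : Set τ}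

lemma SimpleGraph.Walk.IsPath.exists_adj_exit {a b : τ} {p : T.Walk a b} (hp : p.IsPath)
    (ha : a ∈ C') (hb : b ∉ C') :
    ∃ s₁ ∈ C', ∃ s₂ ∉ C', T.Adj s₁ s₂ ∧ (T.deleteEdges {s(s₁, s₂)}).Reachable s₂ b := by
  classical
  induction p with
  | nil => exact absurd ha hb
  | @cons u c d huc w ih =>
    obtain ⟨hw, hu⟩ := (Walk.cons_isPath_iff huc w).mp hp
    by_cases hc : c ∈ C'
    · exact ih hw hc hb
    · exact ⟨u, ha, c, hc, huc,
        (w.toDeleteEdge _ fun he => hu (w.fst_mem_support_of_mem_edges he)).reachable⟩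

lemma SimpleGraph.Reachable.deleteEdges_of_induce {s₁ s₂ : τ} (hs₂ : s₂ ∉ C') {p q : C'}
    (hpq : (T.induce C').Reachable p q) : (T.deleteEdges {s(s₁, s₂)}).Reachable p q :=
  hpq.map
    { toFun := Subtype.val
      map_rel' := fun {p q} hpq => by
        refine deleteEdges_adj.mpr ⟨hpq, fun he => ?_⟩
        rcases Sym2.eq_iff.mp (Set.mem_singleton_iff.mp he) with ⟨-, rfl⟩ | ⟨rfl, -⟩
        exacts [hs₂ q.2, hs₂ p.2] }

lemma IsRegion.finite_exits (hC' : IsRegion T C') :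
    {p : τ × τ | p.1 ∈ C' ∧ p.2 ∉ C' ∧ T.Adj p.1 p.2}.Finite := by
  refine Set.Finite.of_finite_image (f := fun p => s(p.1, p.2)) (hC'.2.subset ?_) ?_
  · rintro e ⟨⟨a, b⟩, ⟨ha, hb, hab⟩, rfl⟩
    exact ⟨T.mem_edgeSet.mpr hab, a, ha, b, hb, rfl⟩
  · rintro ⟨a, b⟩ ⟨ha, -, -⟩ ⟨c, d⟩ ⟨-, hd, -⟩ heq
    rcases Sym2.eq_iff.mp heq with ⟨rfl, rfl⟩ | ⟨rfl, rfl⟩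
    · rfl
    · exact absurd ha hd

variable {G : SimpleGraph V} {X : τ → Set V}

lemma edgesBetween_biUnion_subset_adhesions (hT : T.Preconnected)
    (hC' : (T.induce C').Preconnected) (hcover : ∀ y, ∃ t, y ∈ X t) :
    edgesBetween G (⋃ t ∈ C', X t) (⋃ t ∈ C', X t)ᶜ ⊆
      ⋃ p ∈ {p : τ × τ | p.1 ∈ C' ∧ p.2 ∉ C' ∧ T.Adj p.1 p.2},
        edgesBetween G (side T X p.1 p.2) (side T X p.2 p.1) := by
  classical
  rintro e ⟨he, x, hx, y, hy, rfl⟩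
  obtain ⟨t, ht, hxt⟩ := Set.mem_iUnion₂.mp hx
  obtain ⟨t', hyt'⟩ := hcover y
  have ht' : t' ∉ C' := fun h => hy (Set.mem_biUnion h hyt')
  obtain ⟨s₁, hs₁, s₂, hs₂, hs, hs₂t'⟩ :=
    (hT t t').some.toPath.2.exists_adj_exit ht ht'
  have hs₁t : (T.deleteEdges {s(s₁, s₂)}).Reachable s₁ t :=
    Reachable.deleteEdges_of_induce hs₂ (hC' ⟨s₁, hs₁⟩ ⟨t, ht⟩)
  refine Set.mem_biUnion (x := (s₁, s₂)) ⟨hs₁, hs₂, hs⟩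
    ⟨he, x, Set.mem_biUnion hs₁t hxt, y, Set.mem_biUnion ?_ hyt', rfl⟩
  rwa [Sym2.eq_swap]

lemma IsRegion.finite_edgesBetween_biUnion (hT : T.Preconnected) (hC' : IsRegion T C')
    (hcover : ∀ y, ∃ t, y ∈ X t)
    (hadhesion : ∀ t₁ t₂, T.Adj t₁ t₂ →
      (edgesBetween G (side T X t₁ t₂) (side T X t₂ t₁)).Finite) :
    (edgesBetween G (⋃ t ∈ C', X t) (⋃ t ∈ C', X t)ᶜ).Finite :=
  (hC'.finite_exits.biUnion fun p hp => hadhesion p.1 p.2 hp.2.2).subset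
    (edgesBetween_biUnion_subset_adhesions hT hC'.1.preconnected hcover)

lemma connected_induce_biUnion (hparts : ∀ t x y, x ∈ X t → y ∈ X t → OmegaEquiv G x y)
    (hnonempty : ∀ t, (X t).Nonempty)
    (hedge : ∀ t₁ t₂, T.Adj t₁ t₂ → ∃ x ∈ X t₁, ∃ y ∈ X t₂, G.Adj x y)
    (hC' : (T.induce C').Connected)
    (hfin : (edgesBetween G (⋃ t ∈ C', X t) (⋃ t ∈ C', X t)ᶜ).Finite) :
    (G.induce (⋃ t ∈ C', X t)).Connected := by
  set C := ⋃ t ∈ C', X t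
  have hmem {t : τ} (ht : t ∈ C') {x : V} (hx : x ∈ X t) : x ∈ C := Set.mem_biUnion ht hx
  have hpart {t : τ} (ht : t ∈ C') {x y : V} (hx : x ∈ X t) (hy : y ∈ X t) :
      (G.induce C).Reachable ⟨x, hmem ht hx⟩ ⟨y, hmem ht hy⟩ :=
    ((hparts t x y hx hy).reachable_induce hfin (hmem ht hx)).2
  have hwalk {p q : C'} (w : (T.induce C').Walk p q) {x y : V} (hx : x ∈ X p) (hy : y ∈ X q) :
      (G.induce C).Reachable ⟨x, hmem p.2 hx⟩ ⟨y, hmem q.2 hy⟩ := by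
    induction w generalizing x with
    | nil => exact hpart (Subtype.prop _) hx hy
    | @cons a b c hab w ih =>
      obtain ⟨u, hu, v, hv, huv⟩ := hedge a b hab
      have huv' : (G.induce C).Adj ⟨u, hmem a.2 hu⟩ ⟨v, hmem b.2 hv⟩ := huv
      exact ((hpart a.2 hx hu).trans huv'.reachable).trans (ih hv hy)
  obtain ⟨⟨t₀, ht₀⟩⟩ := hC'.nonempty
  obtain ⟨x₀, hx₀⟩ := hnonempty t₀
  refine (connected_iff _).mpr ⟨?_, ⟨⟨x₀, hmem ht₀ hx₀⟩⟩⟩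
  rintro ⟨x, hx⟩ ⟨y, hy⟩
  obtain ⟨t, ht, hxt⟩ := Set.mem_iUnion₂.mp hx
  obtain ⟨t', ht', hyt'⟩ := Set.mem_iUnion₂.mp hy
  exact hwalk (hC'.preconnected ⟨t, ht⟩ ⟨t', ht'⟩).some hxt hyt'

end TreeRegion

end

theorem region_of_tree_region_general {V τ : Type*} (G : SimpleGraph V)
    (T : SimpleGraph τ) (hT : T.IsTree) (X : τ → Set V)
    (hblocks : ∀ t, IsOmegaEdgeBlock G (X t))
    (hsurj : ∀ B : Set V, IsOmegaEdgeBlock G B → ∃ t, X t = B)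
    (hadhesion : ∀ t₁ t₂, T.Adj t₁ t₂ →
      (edgesBetween G (side T X t₁ t₂) (side T X t₂ t₁)).Finite)
    (hedge : ∀ t₁ t₂, T.Adj t₁ t₂ → ∃ x ∈ X t₁, ∃ y ∈ X t₂, G.Adj x y)
    (C' : Set τ) (hC' : IsRegion T C') :
    IsRegion G (⋃ t ∈ C', X t) := by
  have hcover (y : V) : ∃ t, y ∈ X t := by
    obtain ⟨t, ht⟩ := hsurj _ ⟨y, rfl⟩
    exact ⟨t, ht ▸ OmegaEquiv.refl G y⟩
  have hfin := hC'.finite_edgesBetween_biUnion hT.connected.preconnected hcover hadhesion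
  exact ⟨connected_induce_biUnion (fun t _ _ => (hblocks t).omegaEquiv)
    (fun t => (hblocks t).nonempty) hedge hC'.1 hfin, hfin⟩

/-- For a tree-cut decomposition of finite adhesion into the ω-edge blocks, with adjacent
parts joined by edges, every region of the decomposition tree induces a region of `G`. -/
theorem region_of_tree_region {V τ : Type*} (G : SimpleGraph V) (hG : G.Connected)
    (T : SimpleGraph τ) (hT : T.IsTree) (X : τ → Set V)
    (hblocks : ∀ t, IsOmegaEdgeBlock G (X t))
    (hinj : Function.Injective X)
    (hsurj : ∀ B : Set V, IsOmegaEdgeBlock G B → ∃ t, X t = B)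
    (hadhesion : ∀ t₁ t₂, T.Adj t₁ t₂ →
      (edgesBetween G (side T X t₁ t₂) (side T X t₂ t₁)).Finite)
    (hedge : ∀ t₁ t₂, T.Adj t₁ t₂ → ∃ x ∈ X t₁, ∃ y ∈ X t₂, G.Adj x y)
    (C' : Set τ) (hC' : IsRegion T C') :
    IsRegion G (⋃ t ∈ C', X t) :=
  region_of_tree_region_general G T hT X hblocks hsurj hadhesion hedge C' hC'
end

section
/- For any graph G and any two distinct ω-edge blocks U and W of G, the set of edges of G with one endpoint in U and the other endpoint in W is finite. -/
/-!
If `U ≠ W` are the blocks of `u` and `w`, some finite edge set `F` separates `u` from `w`.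
Every vertex of `U` stays joined to `u` in `G - F`, and every vertex of `W` to `w`, so an edge
from `U` to `W` outside `F` would join `u` to `w` in `G - F`. Hence all such edges lie in `F`.
-/

namespace SimpleGraph

variable {V : Type*} {G : SimpleGraph V}

theorem omegaEquiv_equivalence (G : SimpleGraph V) : Equivalence (OmegaEquiv G) where
  refl _ _ _ := Reachable.refl _
  symm h F hF := (h F hF).symm
  trans h₁ h₂ F hF := (h₁ F hF).trans (h₂ F hF)

theorem setOf_omegaEquiv_eq {u w : V} (h : OmegaEquiv G u w) :
    {y | OmegaEquiv G u y} = {y | OmegaEquiv G w y} :=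
  Set.ext fun _ =>
    ⟨(omegaEquiv_equivalence G).trans ((omegaEquiv_equivalence G).symm h),
      (omegaEquiv_equivalence G).trans h⟩

theorem exists_finite_not_reachable_deleteEdges {u w : V} (h : ¬ OmegaEquiv G u w) :
    ∃ F : Set (Sym2 V), F.Finite ∧ ¬ (G.deleteEdges F).Reachable u w := by
  simpa [OmegaEquiv] using h

theorem edgesBetween_subset_of_not_reachable {A B : Set V} {F : Set (Sym2 V)} {u w : V}
    (hA : ∀ x ∈ A, (G.deleteEdges F).Reachable u x)
    (hB : ∀ y ∈ B, (G.deleteEdges F).Reachable w y)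
    (huw : ¬ (G.deleteEdges F).Reachable u w) :
    edgesBetween G A B ⊆ F := by
  rintro _ ⟨hxy, x, hx, y, hy, rfl⟩
  by_contra hxyF
  have hadj : (G.deleteEdges F).Adj x y := (deleteEdges_adj ..).mpr ⟨hxy, hxyF⟩
  exact huw (((hA x hx).trans hadj.reachable).trans (hB y hy).symm)

end SimpleGraph

/-- Between any two distinct ω-edge blocks of a graph there are only finitely many edges. -/
theorem edgesBetween_distinct_omegaEdgeBlocks_finite {V : Type*} (G : SimpleGraph V)
    (U W : Set V) (hU : IsOmegaEdgeBlock G U) (hW : IsOmegaEdgeBlock G W) (hUW : U ≠ W) :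
    (edgesBetween G U W).Finite := by
  obtain ⟨u, rfl⟩ := hU
  obtain ⟨w, rfl⟩ := hW
  obtain ⟨F, hF, hsep⟩ :=
    G.exists_finite_not_reachable_deleteEdges fun h => hUW (SimpleGraph.setOf_omegaEquiv_eq h)
  exact hF.subset <|
    SimpleGraph.edgesBetween_subset_of_not_reachable (fun _ hx => hx F hF) (fun _ hy => hy F hF) hsep
end

section
/- Let G be a graph and let (A, B) be a bipartition of the set of ω-edge blocks of G such that only finitely many pairs (U, W) with U ∈ A and W ∈ B are joined by an edge of G. Then the set of all edges of G with one endpoint in ⋃A and the other endpoint in ⋃B is finite, where ⋃A ⊆ V(G) denotes the union of the blocks in A and ⋃B the union of the blocks in B. -/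
/-!
Two distinct ω-edge blocks are separated by a finite edge set `F`, and every edge between
them must lie in `F`: otherwise it would join the blocks in `G - F`. So each of the finitely
many adjacent pairs of blocks across the bipartition contributes finitely many edges, and
every crossing edge is an edge between such a pair.
-/

namespace OmegaEquiv

variable {V : Type*} {G : SimpleGraph V} {x y z : V}

theorem symm (h : OmegaEquiv G x y) : OmegaEquiv G y x :=
  fun F hF => (h F hF).symm

theorem trans (h : OmegaEquiv G x y) (h' : OmegaEquiv G y z) : OmegaEquiv G x z :=
  fun F hF => (h F hF).trans (h' F hF)

end OmegaEquiv

section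

variable {V : Type*} {G : SimpleGraph V}

theorem edgesBetween_subset_of_not_reachable {F : Set (Sym2 V)} {U W : Set V} {a b : V}
    (hU : ∀ u ∈ U, (G.deleteEdges F).Reachable a u)
    (hW : ∀ w ∈ W, (G.deleteEdges F).Reachable b w)
    (hab : ¬ (G.deleteEdges F).Reachable a b) :
    edgesBetween G U W ⊆ F := by
  rintro _ ⟨he, u, hu, w, hw, rfl⟩
  by_contra huw
  have hadj : (G.deleteEdges F).Adj u w := SimpleGraph.deleteEdges_adj.2 ⟨he, huw⟩
  exact hab (((hU u hu).trans hadj.reachable).trans (hW w hw).symm)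

theorem IsOmegaEdgeBlock.edgesBetween_finite {U W : Set V} (hU : IsOmegaEdgeBlock G U)
    (hW : IsOmegaEdgeBlock G W) (hne : U ≠ W) : (edgesBetween G U W).Finite := by
  obtain ⟨a, rfl⟩ := hU
  obtain ⟨b, rfl⟩ := hW
  have hab : ¬ OmegaEquiv G a b := fun h =>
    hne (Set.ext fun y => ⟨h.symm.trans, h.trans⟩)
  obtain ⟨F, hF, hsep⟩ : ∃ F : Set (Sym2 V), F.Finite ∧ ¬ (G.deleteEdges F).Reachable a b := by
    simpa [OmegaEquiv] using hab
  exact hF.subset <|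
    edgesBetween_subset_of_not_reachable (fun u hu => hu F hF) (fun w hw => hw F hF) hsep

theorem edgesBetween_sUnion_subset (A B : Set (Set V)) :
    edgesBetween G (⋃₀ A) (⋃₀ B) ⊆
      ⋃ p ∈ {p : Set V × Set V | p.1 ∈ A ∧ p.2 ∈ B ∧ ∃ x ∈ p.1, ∃ y ∈ p.2, G.Adj x y},
        edgesBetween G p.1 p.2 := by
  rintro _ ⟨he, x, ⟨U, hUA, hxU⟩, y, ⟨W, hWB, hyW⟩, rfl⟩
  exact Set.mem_biUnion (x := (U, W)) ⟨hUA, hWB, x, hxU, y, hyW, he⟩ ⟨he, x, hxU, y, hyW, rfl⟩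

end

theorem edges_across_block_bipartition_finite_general {V : Type*} (G : SimpleGraph V)
    (A B : Set (Set V))
    (hA : ∀ U ∈ A, IsOmegaEdgeBlock G U) (hB : ∀ W ∈ B, IsOmegaEdgeBlock G W)
    (hdisj : Disjoint A B)
    (hpairs : {p : Set V × Set V |
      p.1 ∈ A ∧ p.2 ∈ B ∧ ∃ x ∈ p.1, ∃ y ∈ p.2, G.Adj x y}.Finite) :
    (edgesBetween G (⋃₀ A) (⋃₀ B)).Finite :=
  (hpairs.biUnion fun p hp => (hA p.1 hp.1).edgesBetween_finite (hB p.2 hp.2.1)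
    (hdisj.ne_of_mem hp.1 hp.2.1)).subset (edgesBetween_sUnion_subset A B)

/-- If `(A, B)` is a bipartition of the ω-edge blocks of `G` such that only finitely many
pairs of blocks across the bipartition are joined by an edge, then only finitely many edges
of `G` cross the corresponding vertex bipartition. -/
theorem edges_across_block_bipartition_finite {V : Type*} (G : SimpleGraph V)
    (A B : Set (Set V))
    (hA : ∀ U ∈ A, IsOmegaEdgeBlock G U) (hB : ∀ W ∈ B, IsOmegaEdgeBlock G W)
    (hdisj : Disjoint A B)
    (hcover : ∀ U : Set V, IsOmegaEdgeBlock G U → U ∈ A ∪ B)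
    (hpairs : {p : Set V × Set V |
      p.1 ∈ A ∧ p.2 ∈ B ∧ ∃ x ∈ p.1, ∃ y ∈ p.2, G.Adj x y}.Finite) :
    (edgesBetween G (⋃₀ A) (⋃₀ B)).Finite :=
  edges_across_block_bipartition_finite_general G A B hA hB hdisj hpairs
end

section
/- Let G be a connected graph and let G̃ be the graph whose vertex set is the set of ω-edge blocks of G, where two blocks U ≠ W are adjacent if and only if G has an edge with one endpoint in U and the other in W. Then G̃ is connected and finitely separable. -/
/-- The graph on the ω-edge blocks of `G`, with two distinct blocks adjacent iff `G` has an
edge between them. -/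
def blockGraph {V : Type*} (G : SimpleGraph V) :
    SimpleGraph {B : Set V // IsOmegaEdgeBlock G B} where
  Adj U W := U ≠ W ∧ ∃ x ∈ U.1, ∃ y ∈ W.1, G.Adj x y
  symm := by
    constructor
    rintro U W ⟨hne, x, hx, y, hy, hxy⟩
    exact ⟨hne.symm, y, hy, x, hx, hxy.symm⟩
  loopless := by
    constructor
    rintro U ⟨hne, -⟩
    exact hne rfl

section Aux

variable {V : Type*} (G : SimpleGraph V)

lemma omega_refl (x : V) : OmegaEquiv G x x := fun _ _ => SimpleGraph.Reachable.refl x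

lemma omega_symm {x y : V} (h : OmegaEquiv G x y) : OmegaEquiv G y x :=
  fun F hF => (h F hF).symm

lemma omega_trans {x y z : V} (h1 : OmegaEquiv G x y) (h2 : OmegaEquiv G y z) :
    OmegaEquiv G x z := fun F hF => (h1 F hF).trans (h2 F hF)

/-- The block of a vertex. -/
def blockOf (x : V) : {B : Set V // IsOmegaEdgeBlock G B} :=
  ⟨{y | OmegaEquiv G x y}, x, rfl⟩

lemma mem_blockOf (x : V) : x ∈ (blockOf G x).1 := omega_refl G x

lemma blockOf_eq_of_mem {B : {B : Set V // IsOmegaEdgeBlock G B}} {a : V}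
    (ha : a ∈ B.1) : blockOf G a = B := by
  obtain ⟨x, hx⟩ := B.2
  apply Subtype.ext
  rw [hx]
  have hxa : OmegaEquiv G x a := by rw [hx] at ha; exact ha
  ext z
  exact ⟨fun h => omega_trans G hxa h, fun h => omega_trans G (omega_symm G hxa) h⟩

lemma omega_of_mem_same {B : {B : Set V // IsOmegaEdgeBlock G B}} {a b : V}
    (ha : a ∈ B.1) (hb : b ∈ B.1) : OmegaEquiv G a b := by
  obtain ⟨x, hx⟩ := B.2
  rw [hx] at ha hb
  exact omega_trans G (omega_symm G ha) hb

lemma reachable_blockOf {a b : V} (h : G.Reachable a b) :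
    (blockGraph G).Reachable (blockOf G a) (blockOf G b) := by
  obtain ⟨w⟩ := h
  induction w with
  | nil => exact SimpleGraph.Reachable.refl _
  | @cons u v w huv _ ih =>
    refine SimpleGraph.Reachable.trans ?_ ih
    by_cases hq : blockOf G u = blockOf G v
    · rw [hq]
    · exact SimpleGraph.Adj.reachable
        ⟨hq, u, mem_blockOf G u, v, mem_blockOf G v, huv⟩

lemma key_walk {F : Set (Sym2 V)} (hF : F.Finite)
    {A B : {B : Set V // IsOmegaEdgeBlock G B}}
    (w : ((blockGraph G).deleteEdges
      ((Sym2.map (blockOf G) '' F) ∩ (blockGraph G).edgeSet)).Walk A B) :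
    ∀ a ∈ A.1, ∀ b ∈ B.1, (G.deleteEdges F).Reachable a b := by
  induction w with
  | nil =>
    intro a ha b hb
    exact omega_of_mem_same G ha hb F hF
  | @cons A C B hAC p ih =>
    intro a ha b hb
    rw [SimpleGraph.deleteEdges_adj] at hAC
    obtain ⟨⟨hne, u, hu, v, hv, huv⟩, hnotF⟩ := hAC
    have hsuv : s(u, v) ∉ F := by
      intro hm
      apply hnotF
      refine ⟨⟨s(u, v), hm, ?_⟩, ?_⟩
      · rw [Sym2.map_pair_eq, blockOf_eq_of_mem G hu, blockOf_eq_of_mem G hv]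
      · exact ⟨hne, u, hu, v, hv, huv⟩
    have h1 : (G.deleteEdges F).Reachable a u := omega_of_mem_same G ha hu F hF
    have h2 : (G.deleteEdges F).Adj u v := by
      rw [SimpleGraph.deleteEdges_adj]; exact ⟨huv, hsuv⟩
    exact (h1.trans h2.reachable).trans (ih v hv b hb)

end Aux

/-- For a connected graph `G`, the graph of ω-edge blocks of `G` is connected and finitely
separable. -/
theorem blockGraph_connected_and_finSeparable {V : Type*} (G : SimpleGraph V)
    (hG : G.Connected) :
    (blockGraph G).Connected ∧ FinSeparable (blockGraph G) := by
  have hrep : ∀ B : {B : Set V // IsOmegaEdgeBlock G B}, ∃ x, B = blockOf G x := by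
    intro B
    obtain ⟨x, hx⟩ := B.2
    exact ⟨x, Subtype.ext hx⟩
  constructor
  · have hne : Nonempty V := hG.nonempty
    haveI : Nonempty {B : Set V // IsOmegaEdgeBlock G B} := ⟨blockOf G hne.some⟩
    refine SimpleGraph.Connected.mk ?_
    intro U W
    obtain ⟨x, rfl⟩ := hrep U
    obtain ⟨y, rfl⟩ := hrep W
    exact reachable_blockOf G (hG x y)
  · intro U W hUW
    obtain ⟨x, rfl⟩ := hrep U
    obtain ⟨y, rfl⟩ := hrep W
    have hxy : ¬ OmegaEquiv G x y := by
      intro h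
      exact hUW (blockOf_eq_of_mem G (show y ∈ (blockOf G x).1 from h)).symm
    simp only [OmegaEquiv, not_forall] at hxy
    obtain ⟨F, hF, hnr⟩ := hxy
    refine ⟨(Sym2.map (blockOf G) '' F) ∩ (blockGraph G).edgeSet,
      Set.Finite.subset (hF.image _) Set.inter_subset_left, Set.inter_subset_right, ?_⟩
    intro ⟨w⟩
    exact hnr (key_walk G hF w x (mem_blockOf G x) y (mem_blockOf G y))
end

section
/- Let G be a connected graph and let (T, 𝒳) be a tree-cut decomposition of G of finite adhesion. Then for every ray t₁t₂t₃… in T there exists a ray S in G such that for every n, some tail of S is contained in ⋃_{t ∈ Tₙ} X_t, where Tₙ denotes the component of T − tₙtₙ₊₁ containing tₙ₊₁. -/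
open SimpleGraph

/-- A ray in `G` is an injective one-way infinite path. -/
def IsRay {V : Type*} (G : SimpleGraph V) (f : ℕ → V) : Prop :=
  Function.Injective f ∧ ∀ n, G.Adj (f n) (f (n + 1))

namespace RayAux

variable {V : Type*} {G : SimpleGraph V}

lemma last_exit {A B : Set V} {a b : V} (p : G.Walk a b)
    (hA : ∀ v ∈ p.support, v ∈ A) (hb : b ∈ B) :
    ∃ y, y ∈ B ∧ (y = a ∨ ∃ x, x ∉ B ∧ G.Adj x y) ∧
      (∃ q : G.Walk a y, ∀ v ∈ q.support, v ∈ A) ∧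
      (∃ q : G.Walk y b, ∀ v ∈ q.support, v ∈ A ∧ v ∈ B) := by
  induction p with
  | nil =>
    refine ⟨_, hb, Or.inl rfl, ⟨Walk.nil, hA⟩, ⟨Walk.nil, fun v hv => ⟨hA v hv, ?_⟩⟩⟩
    simp only [Walk.support_nil, List.mem_singleton] at hv
    subst hv; exact hb
  | @cons u c d h q ih =>
    have hA' : ∀ v ∈ q.support, v ∈ A := fun v hv => hA v (by simp [hv])
    obtain ⟨y, hyB, hcase, ⟨q1, hq1⟩, ⟨q2, hq2⟩⟩ := ih hA' hb
    rcases hcase with rfl | ⟨x, hx, hadj⟩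
    · by_cases haB : u ∈ B
      · refine ⟨u, haB, Or.inl rfl, ⟨Walk.nil, fun v hv => by
          simp only [Walk.support_nil, List.mem_singleton] at hv; subst hv; exact hA _ (by simp)⟩,
          ⟨Walk.cons h q2, fun v hv => ?_⟩⟩
        simp only [Walk.support_cons, List.mem_cons] at hv
        rcases hv with rfl | hv
        · exact ⟨hA _ (by simp), haB⟩
        · exact hq2 v hv
      · refine ⟨y, hyB, Or.inr ⟨u, haB, h⟩, ⟨Walk.cons h Walk.nil, fun v hv => ?_⟩, ⟨q2, hq2⟩⟩
        simp only [Walk.support_cons, Walk.support_nil, List.mem_cons, List.mem_singleton,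
          List.not_mem_nil, or_false] at hv
        rcases hv with rfl | rfl
        · exact hA _ (by simp)
        · exact hA' _ (by simp)
    · refine ⟨y, hyB, Or.inr ⟨x, hx, hadj⟩, ⟨Walk.cons h q1, fun v hv => ?_⟩, ⟨q2, hq2⟩⟩
      simp only [Walk.support_cons, List.mem_cons] at hv
      rcases hv with rfl | hv
      · exact hA _ (by simp)
      · exact hq1 v hv


lemma exists_cofinal_fiber {F : Set V} (hF : F.Finite) (f : ℕ → V) (hf : ∀ n, f n ∈ F) :
    ∃ y, y ∈ F ∧ ∀ m : ℕ, ∃ m', m ≤ m' ∧ f m' = y := by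
  have : Finite F := hF
  obtain ⟨y, hy⟩ := Finite.exists_infinite_fiber (fun n => (⟨f n, hf n⟩ : F))
  refine ⟨y, y.2, fun m => ?_⟩
  have hinf : Set.Infinite ((fun n => (⟨f n, hf n⟩ : F)) ⁻¹' {y}) :=
    fun hfin2 => hy.not_finite hfin2.to_subtype
  obtain ⟨m', hm', hlt⟩ := hinf.exists_gt m
  exact ⟨m', hlt.le, congrArg Subtype.val hm'⟩

lemma extract_ray (w : ℕ → V)
    (hadj : ∀ k, w k = w (k + 1) ∨ G.Adj (w k) (w (k + 1)))
    (hfin : ∀ v, {k | w k = v}.Finite) :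
    ∃ κ : ℕ → ℕ, StrictMono κ ∧ IsRay G (fun k => w (κ k)) := by
  classical
  set M : ℕ → ℕ := fun k => (hfin (w k)).toFinset.max' ⟨k, by simp⟩ with hM
  have hMmem : ∀ k, w (M k) = w k := fun k => by
    have := (hfin (w k)).toFinset.max'_mem ⟨k, by simp⟩
    simpa using this
  have hMle : ∀ k j, w j = w k → j ≤ M k := fun k j hj =>
    Finset.le_max' _ j (by simpa using hj)
  set κ : ℕ → ℕ := fun k => Nat.rec 0 (fun _ κk => M κk + 1) k with hκ
  have hκsucc : ∀ k, κ (k + 1) = M (κ k) + 1 := fun k => rfl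
  have hκlt : ∀ k, κ k < κ (k + 1) := fun k =>
    Nat.lt_succ_of_le (hMle (κ k) (κ k) rfl)
  have hκmono : StrictMono κ := strictMono_nat_of_lt_succ hκlt
  have hadj' : ∀ k, G.Adj (w (κ k)) (w (κ (k + 1))) := by
    intro k
    rcases hadj (M (κ k)) with heq | hA
    · exfalso
      have := hMle (κ k) (M (κ k) + 1) (by rw [← heq, hMmem])
      omega
    · rw [hκsucc]; rw [hMmem] at hA; exact hA
  have hne : ∀ i j, i < j → w (κ j) ≠ w (κ i) := by
    intro i j hij hcon
    have h1 : κ (i + 1) ≤ κ j := hκmono.monotone hij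
    have h2 := hMle (κ i) (κ j) hcon
    rw [hκsucc] at h1
    omega
  refine ⟨κ, hκmono, ⟨?_, hadj'⟩⟩
  intro i j hij
  by_contra hcon
  rcases lt_or_gt_of_ne hcon with h | h
  · exact hne i j h hij.symm
  · exact hne j i h hij


lemma reachable_delete_or {τ : Type*} {H : SimpleGraph τ} (a b : τ) {x u : τ} (p : H.Walk x u) :
    (H.deleteEdges {s(a, b)}).Reachable x u ∨ (H.deleteEdges {s(a, b)}).Reachable a u ∨
      (H.deleteEdges {s(a, b)}).Reachable b u := by
  induction p with
  | nil => exact Or.inl (Reachable.refl _)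
  | @cons w c d h q ih =>
    rcases ih with hcu | h'
    · by_cases hec : s(w, c) = s(a, b)
      · rw [Sym2.eq_iff] at hec
        rcases hec with ⟨rfl, rfl⟩ | ⟨rfl, rfl⟩
        · exact Or.inr (Or.inr hcu)
        · exact Or.inr (Or.inl hcu)
      · refine Or.inl (Reachable.trans ?_ hcu)
        refine Adj.reachable ?_
        rw [deleteEdges_adj]
        exact ⟨h, by rwa [Set.mem_singleton_iff]⟩
    · exact Or.inr h'

theorem abstract_ray (G : SimpleGraph V) (hconn : G.Connected)
    (B : ℕ → Set V)
    (hdec : ∀ n, B (n + 1) ⊆ B n)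
    (hBne : ∀ n, (B n).Nonempty)
    (hfin : ∀ n, {y | y ∈ B n ∧ ∃ x, x ∉ B n ∧ G.Adj x y}.Finite)
    (hesc : ∀ v, ∃ n, v ∉ B n) :
    ∃ S : ℕ → V, IsRay G S ∧ ∀ n, ∃ m, ∀ k, m ≤ k → S k ∈ B n := by
  classical
  have hanti : ∀ {m n : ℕ}, m ≤ n → B n ⊆ B m := by
    intro m n h
    induction h with
    | refl => exact fun _ h => h
    | step _ ih => exact fun v hv => ih (hdec _ hv)
  -- the "good vertex" predicate
  let Good : ℕ → V → Prop := fun n y => y ∈ B n ∧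
    ∀ m, ∃ v, v ∈ B m ∧ ∃ q : G.Walk y v, ∀ u ∈ q.support, u ∈ B n
  have step : ∀ (n : ℕ) (A : Set V) (y₀ : V),
      (∀ m, ∃ v, v ∈ B m ∧ ∃ q : G.Walk y₀ v, ∀ u ∈ q.support, u ∈ A) →
      ∃ y, Good n y ∧ ∃ q : G.Walk y₀ y, ∀ u ∈ q.support, u ∈ A := by
    intro n A y₀ H
    have H' : ∀ m : ℕ, ∃ y, (y ∈ insert y₀ {y | y ∈ B n ∧ ∃ x, x ∉ B n ∧ G.Adj x y}) ∧ y ∈ B n ∧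
        (∃ q : G.Walk y₀ y, ∀ u ∈ q.support, u ∈ A) ∧
        (∃ v, v ∈ B m ∧ ∃ q : G.Walk y v, ∀ u ∈ q.support, u ∈ B n) := by
      intro m
      obtain ⟨v, hv, q, hq⟩ := H (max m n)
      have hvB : v ∈ B n := hanti (le_max_right m n) hv
      obtain ⟨y, hyB, hcase, ⟨q1, hq1⟩, ⟨q2, hq2⟩⟩ := last_exit q hq hvB
      refine ⟨y, ?_, hyB, ⟨q1, hq1⟩,
        ⟨v, hanti (le_max_left m n) hv, q2, fun u hu => (hq2 u hu).2⟩⟩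
      rcases hcase with rfl | ⟨x, hx, hadj⟩
      · exact Set.mem_insert _ _
      · exact Set.mem_insert_of_mem _ ⟨hyB, x, hx, hadj⟩
    choose f hfF hfB hfq1 hfq2 using H'
    obtain ⟨y, _, hy⟩ := exists_cofinal_fiber ((hfin n).insert y₀) f hfF
    obtain ⟨m₀, _, hm₀⟩ := hy 0
    refine ⟨y, ⟨hm₀ ▸ hfB m₀, fun m => ?_⟩, hm₀ ▸ hfq1 m₀⟩
    obtain ⟨m', hm', hfm'⟩ := hy m
    obtain ⟨v, hv, q, hq⟩ := hfq2 m'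
    exact ⟨v, hanti hm' hv, hfm' ▸ ⟨q, hq⟩⟩
  obtain ⟨x₀⟩ := hconn.nonempty
  have base : ∃ y, Good 0 y := by
    obtain ⟨y, hy, -⟩ := step 0 Set.univ x₀ (fun m => by
      obtain ⟨v, hv⟩ := hBne m
      exact ⟨v, hv, (hconn.preconnected x₀ v).some, fun u _ => trivial⟩)
    exact ⟨y, hy⟩
  have stepEx : ∀ n (y : V), Good n y →
      ∃ y', Good (n + 1) y' ∧ ∃ q : G.Walk y y', ∀ u ∈ q.support, u ∈ B n :=
    fun n y hy => step (n + 1) (B n) y hy.2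
  let g : ∀ n : ℕ, {y : V // Good n y} := fun n =>
    Nat.rec ⟨base.choose, base.choose_spec⟩
      (fun n p => ⟨(stepEx n p.1 p.2).choose, (stepEx n p.1 p.2).choose_spec.1⟩) n
  let Y : ℕ → V := fun n => (g n).1
  have hgood : ∀ n, Good n (Y n) := fun n => (g n).2
  have hg : ∀ n, ∃ q : G.Walk (Y n) (Y (n + 1)), ∀ u ∈ q.support, u ∈ B n :=
    fun n => (stepEx n (g n).1 (g n).2).choose_spec.2
  choose W hW using hg
  -- flatten the walks into an infinite pseudo-walk
  let σ : ℕ → ℕ := fun n => Nat.rec 0 (fun n s => s + (W n).length + 1) n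
  have hσsucc : ∀ n, σ (n + 1) = σ n + (W n).length + 1 := fun n => rfl
  have hσzero : σ 0 = 0 := rfl
  have hσmono : StrictMono σ := strictMono_nat_of_lt_succ (fun n => by rw [hσsucc]; omega)
  have hex : ∀ k, ∃ n, k < σ (n + 1) := fun k =>
    ⟨k, lt_of_lt_of_le (Nat.lt_succ_self k) (hσmono.le_apply)⟩
  let lvl : ℕ → ℕ := fun k => Nat.find (hex k)
  have hlvl1 : ∀ k, k < σ (lvl k + 1) := fun k => Nat.find_spec (hex k)
  have hlvl2 : ∀ k, σ (lvl k) ≤ k := by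
    intro k
    rcases Nat.eq_zero_or_pos (lvl k) with h0 | hpos
    · rw [h0, hσzero]; exact Nat.zero_le k
    · have h := Nat.find_min (hex k) (show lvl k - 1 < lvl k by omega)
      have he : (lvl k - 1) + 1 = lvl k := by omega
      rw [he] at h
      omega
  have hlvl_eq : ∀ k n, σ n ≤ k → k < σ (n + 1) → lvl k = n := by
    intro k n h1 h2
    rcases lt_trichotomy (lvl k) n with h | h | h
    · have hs : σ (lvl k + 1) ≤ σ n := hσmono.monotone h
      have := hlvl1 k
      omega
    · exact h
    · exact absurd h2 (Nat.find_min (hex k) h)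
  let w : ℕ → V := fun k => (W (lvl k)).getVert (k - σ (lvl k))
  have hwlen : ∀ k, k - σ (lvl k) ≤ (W (lvl k)).length := by
    intro k
    have h1 := hlvl1 k
    have h2 := hlvl2 k
    rw [hσsucc] at h1
    omega
  have hwB : ∀ k, w k ∈ B (lvl k) := fun k =>
    hW (lvl k) _ (Walk.mem_support_iff_exists_getVert.mpr ⟨_, rfl, hwlen k⟩)
  have hlvlmono : Monotone lvl := by
    apply monotone_nat_of_le_succ
    intro k
    by_contra hcon
    push_neg at hcon
    have h1 : σ (lvl (k + 1) + 1) ≤ σ (lvl k) := hσmono.monotone hcon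
    have h2 := hlvl1 (k + 1)
    have h3 := hlvl2 k
    omega
  have hlvlσ : ∀ n, lvl (σ n) = n := fun n => hlvl_eq _ _ le_rfl (hσmono (Nat.lt_succ_self n))
  have hadjw : ∀ k, w k = w (k + 1) ∨ G.Adj (w k) (w (k + 1)) := by
    intro k
    have h1 : σ (lvl k) ≤ k := hlvl2 k
    have h2 : k < σ (lvl k + 1) := hlvl1 k
    rcases Nat.lt_or_ge (k + 1) (σ (lvl k + 1)) with hlt | hge
    · have hl : lvl (k + 1) = lvl k := hlvl_eq _ _ (by omega) hlt
      right
      have hlen : k - σ (lvl k) < (W (lvl k)).length := by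
        rw [hσsucc] at hlt
        omega
      have hA := (W (lvl k)).adj_getVert_succ hlen
      have e1 : (k + 1) - σ (lvl (k + 1)) = (k - σ (lvl k)) + 1 := by rw [hl]; omega
      show G.Adj ((W (lvl k)).getVert (k - σ (lvl k)))
        ((W (lvl (k + 1))).getVert ((k + 1) - σ (lvl (k + 1))))
      rw [e1, hl]
      exact hA
    · have hk1 : k + 1 = σ (lvl k + 1) := by omega
      have hl : lvl (k + 1) = lvl k + 1 :=
        hlvl_eq _ _ (le_of_eq hk1.symm) (by rw [hk1]; exact hσmono (show lvl k + 1 < lvl k + 1 + 1 by omega))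
      left
      have e1 : k - σ (lvl k) = (W (lvl k)).length := by
        rw [hσsucc] at hk1
        omega
      show (W (lvl k)).getVert (k - σ (lvl k)) =
        (W (lvl (k + 1))).getVert ((k + 1) - σ (lvl (k + 1)))
      rw [hl, e1, (W (lvl k)).getVert_length]
      have e2 : (k + 1) - σ (lvl k + 1) = 0 := by omega
      rw [e2, (W (lvl k + 1)).getVert_zero]
  have hafter : ∀ n k, σ n ≤ k → w k ∈ B n := by
    intro n k hk
    have h1 : lvl (σ n) ≤ lvl k := hlvlmono hk
    rw [hlvlσ] at h1
    exact hanti h1 (hwB k)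
  have hwfin : ∀ v, {k | w k = v}.Finite := by
    intro v
    obtain ⟨n, hn⟩ := hesc v
    apply Set.Finite.subset (Set.finite_Iio (σ n))
    intro k hk
    simp only [Set.mem_setOf_eq] at hk
    simp only [Set.mem_Iio]
    rcases Nat.lt_or_ge k (σ n) with h | h
    · exact h
    · exact absurd (hk ▸ hafter n k h) hn
  obtain ⟨κ, hκ, hray⟩ := extract_ray w hadjw hwfin
  exact ⟨_, hray, fun n => ⟨σ n, fun k hk => hafter n (κ k) (le_trans hk hκ.le_apply)⟩⟩


end RayAux

/-- Given a tree-cut decomposition `(T, X)` of finite adhesion of a connected graph `G` and a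
ray in `T`, there is a ray in `G` having, for every `n`, a tail contained in the union of the
parts over the component of `T` minus the `n`-th ray edge on the far side. -/
theorem exists_ray_following_tree_ray {V τ : Type*} (G : SimpleGraph V) (hG : G.Connected)
    (T : SimpleGraph τ) (hT : T.IsTree) (X : τ → Set V)
    (hne : ∀ t, (X t).Nonempty)
    (hdisj : ∀ t₁ t₂, t₁ ≠ t₂ → Disjoint (X t₁) (X t₂))
    (hcover : ⋃ t, X t = Set.univ)
    (hadhesion : ∀ t₁ t₂, T.Adj t₁ t₂ →
      (edgesBetween G (side T X t₁ t₂) (side T X t₂ t₁)).Finite)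
    (r : ℕ → τ) (hr : IsRay T r) :
    ∃ S : ℕ → V, IsRay G S ∧
      ∀ n, ∃ m, ∀ k ≥ m, S k ∈ side T X (r (n + 1)) (r n) := by
  classical
  have hrinj := hr.1
  have hTadj : ∀ n, T.Adj (r n) (r (n + 1)) := hr.2
  -- the partition function
  have hpart : ∀ v : V, ∃ t, v ∈ X t := by
    intro v
    have hv : v ∈ ⋃ t, X t := by rw [hcover]; trivial
    exact Set.mem_iUnion.mp hv
  choose π hπ using hpart
  have hπu : ∀ v t, v ∈ X t → t = π v := by
    intro v t ht
    by_contra hne'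
    exact Set.disjoint_left.mp (hdisj t (π v) hne') ht (hπ v)
  have hside : ∀ (a b : τ) (v : V),
      v ∈ side T X a b ↔ (T.deleteEdges {s(a, b)}).Reachable a (π v) := by
    intro a b v
    simp only [side, Set.mem_iUnion, Set.mem_setOf_eq]
    constructor
    · rintro ⟨t, ht, hvt⟩
      rwa [hπu v t hvt] at ht
    · intro h
      exact ⟨π v, h, hπ v⟩
  -- tree facts
  have hbridge : ∀ n, ¬(T.deleteEdges {s(r n, r (n + 1))}).Reachable (r n) (r (n + 1)) := by
    intro n
    have hb : T.IsBridge s(r n, r (n + 1)) :=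
      (isAcyclic_iff_forall_edge_isBridge.mp hT.IsAcyclic) (T.mem_edgeSet.mpr (hTadj n))
    exact isBridge_iff.mp hb
  have hene : ∀ m n : ℕ, m ≠ n → s(r m, r (m + 1)) ≠ s(r n, r (n + 1)) := by
    intro m n hmn hcon
    rw [Sym2.eq_iff] at hcon
    rcases hcon with ⟨h1, h2⟩ | ⟨h1, h2⟩
    · exact hmn (hrinj h1)
    · have e1 := hrinj h1
      have e2 := hrinj h2
      omega
  have hK : ∀ n, ¬(T.deleteEdges {s(r n, r (n + 1))}).Reachable (r 0) (r (n + 1)) := by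
    intro n
    induction n with
    | zero => exact hbridge 0
    | succ n ih =>
      rintro ⟨p⟩
      by_cases hsup : r (n + 1) ∈ p.support
      · exact hbridge (n + 1) (p.dropUntil _ hsup).reachable
      · have hav : ∀ ed ∈ p.edges, ed ∈ (T.deleteEdges {s(r n, r (n + 1))}).edgeSet := by
          intro ed hed
          have h1 := p.edges_subset_edgeSet hed
          rw [edgeSet_deleteEdges] at h1 ⊢
          refine ⟨h1.1, ?_⟩
          rw [Set.mem_singleton_iff]
          intro hmem
          subst hmem
          exact hsup (p.snd_mem_support_of_mem_edges hed)
        have hadj2 : (T.deleteEdges {s(r n, r (n + 1))}).Adj (r (n + 2)) (r (n + 1)) := by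
          rw [deleteEdges_adj]
          refine ⟨(hTadj (n + 1)).symm, ?_⟩
          rw [Set.mem_singleton_iff]
          intro hcon
          rw [Sym2.eq_iff] at hcon
          rcases hcon with ⟨h1, h2⟩ | ⟨h1, h2⟩
          · have := hrinj h1; omega
          · have := hrinj h1; omega
        exact ih ((p.transfer _ hav).reachable.trans hadj2.reachable)
  have hB2 : ∀ n, ¬(T.deleteEdges {s(r (n + 1), r (n + 2))}).Reachable (r (n + 2)) (r n) := by
    intro n hcon
    apply hbridge (n + 1)
    have hadj2 : (T.deleteEdges {s(r (n + 1), r (n + 2))}).Adj (r n) (r (n + 1)) := by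
      rw [deleteEdges_adj]
      refine ⟨hTadj n, ?_⟩
      rw [Set.mem_singleton_iff]
      exact hene n (n + 1) (by omega)
    exact (hcon.trans hadj2.reachable).symm
  have hCdec : ∀ n (u : τ), (T.deleteEdges {s(r (n + 1), r (n + 2))}).Reachable (r (n + 2)) u →
      (T.deleteEdges {s(r n, r (n + 1))}).Reachable (r (n + 1)) u := by
    intro n u hru
    obtain ⟨p⟩ := hru
    by_cases hsup : r n ∈ p.support
    · exact absurd (p.takeUntil _ hsup).reachable (hB2 n)
    · have hav : ∀ ed ∈ p.edges, ed ∈ (T.deleteEdges {s(r n, r (n + 1))}).edgeSet := by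
        intro ed hed
        have h1 := p.edges_subset_edgeSet hed
        rw [edgeSet_deleteEdges] at h1 ⊢
        refine ⟨h1.1, ?_⟩
        rw [Set.mem_singleton_iff]
        intro hmem
        subst hmem
        exact hsup (p.fst_mem_support_of_mem_edges hed)
      have hadj2 : (T.deleteEdges {s(r n, r (n + 1))}).Adj (r (n + 1)) (r (n + 2)) := by
        rw [deleteEdges_adj]
        refine ⟨hTadj (n + 1), ?_⟩
        rw [Set.mem_singleton_iff]
        exact hene (n + 1) n (by omega)
      exact hadj2.reachable.trans (p.transfer _ hav).reachable
  have hcover2 : ∀ n (u : τ), (T.deleteEdges {s(r n, r (n + 1))}).Reachable (r n) u ∨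
      (T.deleteEdges {s(r n, r (n + 1))}).Reachable (r (n + 1)) u := by
    intro n u
    obtain ⟨p⟩ := hT.isConnected.preconnected (r n) u
    rcases RayAux.reachable_delete_or (r n) (r (n + 1)) p with h | h | h
    · exact Or.inl h
    · exact Or.inl h
    · exact Or.inr h
  have hesc0 : ∀ t : τ, ∃ n, ¬(T.deleteEdges {s(r n, r (n + 1))}).Reachable (r (n + 1)) t := by
    intro t
    by_contra hcon
    push_neg at hcon
    obtain ⟨p⟩ := hT.isConnected.preconnected (r 0) t
    have hsup : ∀ n, r (n + 1) ∈ p.support := by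
      intro n
      by_contra hns
      have hav : ∀ ed ∈ p.edges, ed ∈ (T.deleteEdges {s(r n, r (n + 1))}).edgeSet := by
        intro ed hed
        rw [edgeSet_deleteEdges]
        refine ⟨p.edges_subset_edgeSet hed, ?_⟩
        rw [Set.mem_singleton_iff]
        intro hmem
        subst hmem
        exact hns (p.snd_mem_support_of_mem_edges hed)
      exact hK n ((p.transfer _ hav).reachable.trans (hcon n).symm)
    have hinj2 : Function.Injective (fun n : ℕ => r (n + 1)) := by
      intro i j hij
      have := hrinj hij
      omega
    have hfin2 : (Set.range fun n : ℕ => r (n + 1)).Finite :=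
      (p.support.finite_toSet).subset (by rintro x ⟨n, rfl⟩; exact hsup n)
    exact (Set.infinite_range_of_injective hinj2) hfin2
  -- the decreasing sets
  set B : ℕ → Set V := fun n => side T X (r (n + 1)) (r n) with hB
  have hBmem : ∀ n v, v ∈ B n ↔
      (T.deleteEdges {s(r n, r (n + 1))}).Reachable (r (n + 1)) (π v) := by
    intro n v
    rw [hB]
    rw [hside (r (n + 1)) (r n) v]
    rw [show (s(r (n + 1), r n) : Sym2 τ) = s(r n, r (n + 1)) from Sym2.eq_swap]
  have hdecB : ∀ n, B (n + 1) ⊆ B n := fun n v hv =>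
    (hBmem n v).mpr (hCdec n (π v) ((hBmem (n + 1) v).mp hv))
  have hBneB : ∀ n, (B n).Nonempty := by
    intro n
    obtain ⟨v, hv⟩ := hne (r (n + 1))
    refine ⟨v, (hBmem n v).mpr ?_⟩
    rw [← hπu v _ hv]
  have hescB : ∀ v, ∃ n, v ∉ B n := by
    intro v
    obtain ⟨n, hn⟩ := hesc0 (π v)
    exact ⟨n, fun hv => hn ((hBmem n v).mp hv)⟩
  have hfinB : ∀ n, {y | y ∈ B n ∧ ∃ x, x ∉ B n ∧ G.Adj x y}.Finite := by
    intro n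
    have hEfin := hadhesion (r n) (r (n + 1)) (hTadj n)
    have hvert : {v | ∃ ed ∈ edgesBetween G (side T X (r n) (r (n + 1)))
        (side T X (r (n + 1)) (r n)), v ∈ ed}.Finite := by
      have heq : {v | ∃ ed ∈ edgesBetween G (side T X (r n) (r (n + 1)))
          (side T X (r (n + 1)) (r n)), v ∈ ed} =
          ⋃ ed ∈ edgesBetween G (side T X (r n) (r (n + 1))) (side T X (r (n + 1)) (r n)),
            {v | v ∈ ed} := by
        ext v; simp
      rw [heq]
      refine hEfin.biUnion ?_
      intro ed _
      induction ed using Sym2.ind with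
      | _ a b =>
        have h2 : {v | v ∈ s(a, b)} = {a, b} := by
          ext v; simp [Sym2.mem_iff]
        rw [h2]
        exact (Set.finite_singleton b).insert a
    refine hvert.subset ?_
    rintro y ⟨hyB, x, hx, hadj⟩
    have hxA : x ∈ side T X (r n) (r (n + 1)) := by
      rcases hcover2 n (π x) with h | h
      · exact (hside (r n) (r (n + 1)) x).mpr h
      · exact absurd ((hBmem n x).mpr h) hx
    exact ⟨s(x, y), ⟨G.mem_edgeSet.mpr hadj, x, hxA, y, hyB, rfl⟩, Sym2.mem_mk_right x y⟩
  obtain ⟨S, hS, htail⟩ := RayAux.abstract_ray G hG B hdecB hBneB hfinB hescB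
  exact ⟨S, hS, htail⟩
end
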